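/- Let E and F be finite dimensional complex inner product spaces and let φ: E → F be a ℂ-linear map with ‖φ‖ ≤ 1 and adjoint φ†. Let P be the unique positive self-adjoint square root of 1_E − φ†∘φ and Q the unique positive self-adjoint square root of 1_F − φ∘φ†. Equip E × F with the orthogonal direct sum inner product ⟨(x,y),(x',y')⟩ = ⟨x,x'⟩_E + ⟨y,y'⟩_F, and define R: E × F → E × F by R(x,y) = (P x + φ† y, φ x − Q y). Then R is self-adjoint and R ∘ R = id_{E×F}; in particular R is a surjective linear isometry of E × F. -/

import Mathlib

/-!
Expanding `R ∘ R` blockwise, `R ∘ R = id` amounts to `P² + φ†φ = 1`, `Q² + φφ† = 1` and the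
intertwining relation `Q φ = φ P` (together with its adjoint `φ† Q = P φ†`). Since `φ` intertwines
the squares, `φ P² = φ - φφ†φ = Q² φ`, the relation follows from the fact that a positive
operator is determined by its square on eigenvectors: if `P e = μ e` with `μ ≥ 0`, then
`Q² (φ e) = μ² φ e`, which forces `Q (φ e) = μ φ e`. Self-adjointness of `R` comes from that of
`P` and `Q`, and a self-adjoint involution is an isometry.
-/

noncomputable section

variable {E F : Type*}
    [NormedAddCommGroup E] [InnerProductSpace ℂ E] [FiniteDimensional ℂ E]
    [NormedAddCommGroup F] [InnerProductSpace ℂ F] [FiniteDimensional ℂ F]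

/-- The map `R : E × F → E × F`, `R(x,y) = (P x + φ† y, φ x − Q y)`, on the
orthogonal direct sum `WithLp 2 (E × F)`. -/
def Rmap (φ : E →L[ℂ] F) (P : E →L[ℂ] E) (Q : F →L[ℂ] F) :
    WithLp 2 (E × F) →ₗ[ℂ] WithLp 2 (E × F) where
  toFun p :=
    (WithLp.equiv 2 (E × F)).symm
      (P ((WithLp.equiv 2 (E × F)) p).1 +
          ContinuousLinearMap.adjoint φ ((WithLp.equiv 2 (E × F)) p).2,
        φ ((WithLp.equiv 2 (E × F)) p).1 - Q ((WithLp.equiv 2 (E × F)) p).2)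
  map_add' p q := by
    apply (WithLp.equiv 2 (E × F)).injective
    ext <;> simp [Prod.add_def] <;> abel
  map_smul' c p := by
    apply (WithLp.equiv 2 (E × F)).injective
    ext <;> simp [Prod.smul_def, smul_sub]

open ContinuousLinearMap InnerProductSpace

section

variable {𝕜 H : Type*} [RCLike 𝕜] [NormedAddCommGroup H] [InnerProductSpace 𝕜 H]

namespace ContinuousLinearMap

theorem IsPositive.apply_eq_smul_of_apply_apply_eq_sq_smul {T : H →L[𝕜] H} (hT : T.IsPositive)
    {μ : ℝ} (hμ : 0 ≤ μ) {v : H} (hv : T (T v) = ((μ : 𝕜) ^ 2) • v) :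
    T v = (μ : 𝕜) • v := by
  rcases hμ.eq_or_lt with rfl | hμ
  · have hTTv : T (T v) = 0 := by simpa using hv
    have : ⟪T v, T v⟫_𝕜 = 0 := by rw [hT.inner_left_eq_inner_right, hTTv, inner_zero_right]
    simpa using this
  · have h_neg_eigen : ∀ w : H, T w = -(μ : 𝕜) • w → w = 0 := by
      intro w hTw
      have hre := hT.re_inner_nonneg_left w
      rw [hTw, inner_smul_left, inner_self_eq_norm_sq_to_K] at hre
      rw [map_neg, RCLike.conj_ofReal, ← RCLike.ofReal_pow, neg_mul, ← RCLike.ofReal_mul,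
        map_neg, RCLike.ofReal_re] at hre
      have hw : μ * ‖w‖ ^ 2 = 0 := by linarith [mul_nonneg hμ.le (sq_nonneg ‖w‖)]
      simpa [hμ.ne'] using hw
    refine sub_eq_zero.mp (h_neg_eigen _ ?_)
    rw [map_sub, map_smul, hv]
    module

theorem IsPositive.comp_eq_comp_of_comp_sq_eq {K : Type*} [NormedAddCommGroup K]
    [InnerProductSpace 𝕜 K] [FiniteDimensional 𝕜 H] {A : H →L[𝕜] H} {B : K →L[𝕜] K}
    (hA : A.IsPositive) (hB : B.IsPositive) {T : H →L[𝕜] K}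
    (h : T ∘L (A ∘L A) = (B ∘L B) ∘L T) : T ∘L A = B ∘L T := by
  let b := hA.isSymmetric.eigenvectorBasis rfl
  let μ := hA.isSymmetric.eigenvalues rfl
  have hAb : ∀ i, A (b i) = (μ i : 𝕜) • b i := hA.isSymmetric.apply_eigenvectorBasis rfl
  refine coe_injective (b.toBasis.ext fun i => ?_)
  change T (A (b i)) = B (T (b i))
  rw [hAb, map_smul]
  refine (hB.apply_eq_smul_of_apply_apply_eq_sq_smul (hA.toLinearMap.nonneg_eigenvalues rfl i)
    ?_).symm
  simpa [hAb, sq, smul_smul] using congr($h (b i)).symm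

end ContinuousLinearMap

theorem LinearMap.IsSymmetric.norm_map_of_involutive {T : H →ₗ[𝕜] H} (hT : T.IsSymmetric)
    (hT2 : Function.Involutive T) (x : H) : ‖T x‖ = ‖x‖ := by
  have h : ‖T x‖ ^ 2 = ‖x‖ ^ 2 := by
    rw [@norm_sq_eq_re_inner 𝕜, @norm_sq_eq_re_inner 𝕜, hT, hT2]
  exact (sq_eq_sq₀ (norm_nonneg _) (norm_nonneg _)).mp h

end

section Rmap

variable (φ : E →L[ℂ] F) (P : E →L[ℂ] E) (Q : F →L[ℂ] F)

@[simp]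
theorem Rmap_fst (p : WithLp 2 (E × F)) : (Rmap φ P Q p).fst = P p.fst + adjoint φ p.snd := rfl

@[simp]
theorem Rmap_snd (p : WithLp 2 (E × F)) : (Rmap φ P Q p).snd = φ p.fst - Q p.snd := rfl

variable {φ P Q}

theorem Rmap_isSymmetric (hP : IsSelfAdjoint P) (hQ : IsSelfAdjoint Q) :
    (Rmap φ P Q).IsSymmetric := by
  intro p q
  simp only [WithLp.prod_inner_apply, WithLp.ofLp_fst, WithLp.ofLp_snd, Rmap_fst, Rmap_snd,
    inner_add_left, inner_add_right, inner_sub_left, inner_sub_right, adjoint_inner_left,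
    adjoint_inner_right]
  rw [← coe_coe P, hP.isSymmetric, ← coe_coe Q, hQ.isSymmetric]
  ring

theorem Rmap_involutive (hP : IsSelfAdjoint P) (hQ : IsSelfAdjoint Q)
    (hP2 : P ∘L P = 1 - adjoint φ ∘L φ) (hQ2 : Q ∘L Q = 1 - φ ∘L adjoint φ)
    (hQφ : Q ∘L φ = φ ∘L P) : Function.Involutive (Rmap φ P Q) := by
  have hPφ : adjoint φ ∘L Q = P ∘L adjoint φ := by
    simpa [adjoint_comp, hP.adjoint_eq, hQ.adjoint_eq] using congr(adjoint $hQφ)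
  have hPP (x : E) : P (P x) = x - adjoint φ (φ x) := by simpa using DFunLike.congr_fun hP2 x
  have hQQ (y : F) : Q (Q y) = y - φ (adjoint φ y) := by simpa using DFunLike.congr_fun hQ2 y
  have hQφ' (x : E) : Q (φ x) = φ (P x) := DFunLike.congr_fun hQφ x
  have hPφ' (y : F) : adjoint φ (Q y) = P (adjoint φ y) := DFunLike.congr_fun hPφ y
  intro p
  refine WithLp.ofLp_injective 2 (Prod.ext ?_ ?_)
  · simp only [WithLp.ofLp_fst, Rmap_fst, Rmap_snd, map_add, map_sub, hPP, hPφ']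
    abel
  · simp only [WithLp.ofLp_snd, Rmap_fst, Rmap_snd, map_add, map_sub, hQQ, hQφ']
    abel

end Rmap

theorem stmt11_general (φ : E →L[ℂ] F)
    (P : E →L[ℂ] E) (Q : F →L[ℂ] F)
    (hP : P.IsPositive) (hQ : Q.IsPositive)
    (hP2 : P ∘L P = 1 - ContinuousLinearMap.adjoint φ ∘L φ)
    (hQ2 : Q ∘L Q = 1 - φ ∘L ContinuousLinearMap.adjoint φ) :
    (Rmap φ P Q).IsSymmetric ∧
      Rmap φ P Q ∘ₗ Rmap φ P Q = LinearMap.id ∧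
      (∀ p : WithLp 2 (E × F), ‖Rmap φ P Q p‖ = ‖p‖) ∧
      Function.Surjective (Rmap φ P Q) := by
  have hφ_sq : φ ∘L (P ∘L P) = (Q ∘L Q) ∘L φ := by
    ext x
    simp [hP2, hQ2]
  have hQφ : Q ∘L φ = φ ∘L P := (hP.comp_eq_comp_of_comp_sq_eq hQ hφ_sq).symm
  have hR_symm := Rmap_isSymmetric hP.isSelfAdjoint hQ.isSelfAdjoint (φ := φ)
  have hR_inv := Rmap_involutive hP.isSelfAdjoint hQ.isSelfAdjoint hP2 hQ2 hQφ
  exact ⟨hR_symm, LinearMap.ext hR_inv, hR_symm.norm_map_of_involutive hR_inv,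
    hR_inv.surjective⟩

/-- **Statement 11.** Let `E`, `F` be finite dimensional complex inner product
spaces, `φ : E → F` with `‖φ‖ ≤ 1` and adjoint `φ†`, `P` the positive self-adjoint
square root of `1 − φ†φ`, and `Q` the positive self-adjoint square root of
`1 − φφ†`. Equip `E × F` with the orthogonal direct sum inner product and let
`R(x,y) = (P x + φ† y, φ x − Q y)`. Then `R` is self-adjoint and `R ∘ R = id`;
in particular `R` is a surjective linear isometry of `E × F`. -/
theorem stmt11 (φ : E →L[ℂ] F) (hφ : ‖φ‖ ≤ 1)
    (P : E →L[ℂ] E) (Q : F →L[ℂ] F)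
    (hP : P.IsPositive) (hQ : Q.IsPositive)
    (hP2 : P ∘L P = 1 - ContinuousLinearMap.adjoint φ ∘L φ)
    (hQ2 : Q ∘L Q = 1 - φ ∘L ContinuousLinearMap.adjoint φ) :
    (Rmap φ P Q).IsSymmetric ∧
      Rmap φ P Q ∘ₗ Rmap φ P Q = LinearMap.id ∧
      (∀ p : WithLp 2 (E × F), ‖Rmap φ P Q p‖ = ‖p‖) ∧
      Function.Surjective (Rmap φ P Q) :=
  stmt11_general φ P Q hP hQ hP2 hQ2

end
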